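/- The monoid M_3(Z_max) of 3×3 matrices over the tropical integers is not finitely generated. -/

import Mathlib

noncomputable instance : LinearOrderedAddCommMonoidWithTop (WithBot ℤ)ᵒᵈ where
  __ : AddCommMonoid (WithBot ℤ)ᵒᵈ := inferInstance
  __ : LinearOrder (WithBot ℤ)ᵒᵈ := inferInstance
  __ : IsOrderedAddMonoid (WithBot ℤ)ᵒᵈ := inferInstance
  le_top a := bot_le (α := WithBot ℤ) (a := OrderDual.ofDual a)
  top_add' a := WithBot.bot_add (OrderDual.ofDual a)
  isAddLeftRegular_of_ne_top a ha b c h :=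
    WithBot.add_left_cancel (x := OrderDual.ofDual a) (y := OrderDual.ofDual b)
      (z := OrderDual.ofDual c) ha h

/-- The tropical integers `ℤ_max = ℤ ∪ {-∞}` with addition `max` and
multiplication `+`. -/
abbrev Zmax := Tropical (WithBot ℤ)ᵒᵈ

/-- The element of `ℤ_max` corresponding to the integer `z`. -/
noncomputable def tz (z : ℤ) : Zmax := Tropical.trop (OrderDual.toDual (z : WithBot ℤ))

/-!
A matrix whose zeros are exactly the graph of a permutation is prime up to monomial factors:
if `X * Y` has this shape, the finite entries of `X * Y` are covered by three "rectangles"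
`{i | X i k ≠ 0} × {j | Y k j ≠ 0}` avoiding the permutation, and this forces all of them to be
single rows (then `X` is monomial) or all single columns (then `Y` is). So such a matrix in the
submonoid generated by `S` is `U * g * V` with `g ∈ S` and `U`, `V` monomial. For
`cycleMatrix t` the monomial factors cancel from `3 t = (three entries of g) - (three others)`,
so `t` is bounded in terms of the generators.
-/

open Tropical Equiv Function

namespace Zmax

lemma mul_eq_zero_iff {x y : Zmax} : x * y = 0 ↔ x = 0 ∨ y = 0 := by
  simp only [← untrop_inj_iff, untrop_mul, untrop_zero]
  exact WithBot.add_eq_bot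

instance : NoZeroDivisors Zmax := ⟨mul_eq_zero_iff.mp⟩

lemma tz_ne_zero (a : ℤ) : tz a ≠ 0 := by
  simp [tz, ← untrop_inj_iff]

instance : Nontrivial Zmax := ⟨⟨tz 0, 0, tz_ne_zero 0⟩⟩

lemma sum_eq_zero_iff {ι : Type*} {s : Finset ι} {f : ι → Zmax} :
    ∑ i ∈ s, f i = 0 ↔ ∀ i ∈ s, f i = 0 := by
  simp only [← untrop_inj_iff, Finset.untrop_sum', untrop_zero, Finset.inf_eq_top_iff,
    Function.comp_apply]

/-- The integer `a` with `x = tz a`; the junk value at `x = 0 = -∞` is `0`. -/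
def val (x : Zmax) : ℤ := WithBot.unbotD 0 (OrderDual.ofDual (untrop x))

@[simp] lemma val_tz (a : ℤ) : val (tz a) = a := rfl

@[simp] lemma val_one : val 1 = 0 := rfl

lemma tz_val {x : Zmax} (hx : x ≠ 0) : tz (val x) = x := by
  induction x using Tropical.tropRec with | h a => ?_
  induction a using OrderDual.rec with | _ a => ?_
  cases a with
  | bot => exact absurd rfl hx
  | coe a => rfl

lemma val_mul {x y : Zmax} (hx : x ≠ 0) (hy : y ≠ 0) : val (x * y) = val x + val y := by
  rw [← tz_val hx, ← tz_val hy]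
  rfl

end Zmax

open Zmax

lemma Matrix.mul_apply_ne_zero_iff {l m n : Type*} [Fintype m] {A : Matrix l m Zmax}
    {B : Matrix m n Zmax} {i : l} {j : n} :
    (A * B) i j ≠ 0 ↔ ∃ k, A i k ≠ 0 ∧ B k j ≠ 0 := by
  simp [Matrix.mul_apply, Zmax.sum_eq_zero_iff]

section Monomial

variable {n : Type*}

/-- Over `ℤ_max` these are exactly the units of the matrix monoid. -/
def IsMonomial (A : Matrix n n Zmax) : Prop :=
  ∃ σ : Perm n, ∀ i j, A i j ≠ 0 ↔ j = σ i

def HasPermZeros (A : Matrix n n Zmax) : Prop :=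
  ∃ σ : Perm n, ∀ i j, A i j = 0 ↔ j = σ i

lemma isMonomial_one [DecidableEq n] : IsMonomial (1 : Matrix n n Zmax) :=
  ⟨1, fun i j => by simp [Matrix.one_apply, eq_comm]⟩

variable [Fintype n]

lemma monomial_mul_apply {A : Matrix n n Zmax} {σ : Perm n}
    (hA : ∀ i j, A i j ≠ 0 ↔ j = σ i) (B : Matrix n n Zmax) (i j : n) :
    (A * B) i j = A i (σ i) * B (σ i) j := by
  rw [Matrix.mul_apply, Finset.sum_eq_single (σ i)]
  · intro k _ hk
    rw [not_ne_iff.mp (mt (hA i k).1 hk), zero_mul]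
  · simp

lemma mul_monomial_apply {B : Matrix n n Zmax} {σ : Perm n}
    (hB : ∀ i j, B i j ≠ 0 ↔ j = σ i) (A : Matrix n n Zmax) (i j : n) :
    (A * B) i j = A i (σ.symm j) * B (σ.symm j) j := by
  rw [Matrix.mul_apply, Finset.sum_eq_single (σ.symm j)]
  · intro k _ hk
    rw [not_ne_iff.mp (mt (hB k j).1 (by rintro rfl; simp at hk)), mul_zero]
  · simp

lemma IsMonomial.mul {A B : Matrix n n Zmax} (hA : IsMonomial A) (hB : IsMonomial B) :
    IsMonomial (A * B) := by
  obtain ⟨σ, hσ⟩ := hA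
  obtain ⟨τ, hτ⟩ := hB
  refine ⟨σ.trans τ, fun i j => ?_⟩
  rw [monomial_mul_apply hσ, mul_ne_zero_iff, hτ, Equiv.trans_apply]
  simp [(hσ i (σ i)).2 rfl]

lemma HasPermZeros.of_monomial_mul {A B : Matrix n n Zmax} (hA : IsMonomial A)
    (h : HasPermZeros (A * B)) : HasPermZeros B := by
  obtain ⟨σ, hσ⟩ := hA
  obtain ⟨τ, hτ⟩ := h
  refine ⟨σ.symm.trans τ, fun k j => ?_⟩
  have := hτ (σ.symm k) j
  rwa [monomial_mul_apply hσ, mul_eq_zero, σ.apply_symm_apply,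
    or_iff_right ((hσ _ _).2 (σ.apply_symm_apply k).symm)] at this

lemma HasPermZeros.of_mul_monomial {A B : Matrix n n Zmax} (hB : IsMonomial B)
    (h : HasPermZeros (A * B)) : HasPermZeros A := by
  obtain ⟨σ, hσ⟩ := hB
  obtain ⟨τ, hτ⟩ := h
  refine ⟨τ.trans σ.symm, fun i k => ?_⟩
  have := hτ i (σ k)
  rw [mul_monomial_apply hσ, mul_eq_zero, σ.symm_apply_apply,
    or_iff_left ((hσ _ _).2 rfl)] at this
  rw [this, Equiv.trans_apply, Equiv.eq_symm_apply]

def weight (A : Matrix n n Zmax) : ℤ := ∑ i, ∑ j, |val (A i j)|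

lemma weight_nonneg (A : Matrix n n Zmax) : 0 ≤ weight A := by
  unfold weight
  positivity

lemma abs_val_le_weight (A : Matrix n n Zmax) (i j : n) : |val (A i j)| ≤ weight A :=
  calc |val (A i j)| ≤ ∑ j', |val (A i j')| :=
        Finset.single_le_sum (f := fun j' => |val (A i j')|) (fun _ _ => abs_nonneg _)
          (Finset.mem_univ j)
    _ ≤ weight A :=
        Finset.single_le_sum (f := fun i => ∑ j, |val (A i j)|)
          (fun _ _ => Finset.sum_nonneg fun _ _ => abs_nonneg _) (Finset.mem_univ i)

end Monomial

section Fin3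

lemma Fin.perm_three_eq_rotation_of_forall_ne :
    ∀ τ : Perm (Fin 3), (∀ i, τ i ≠ i) → (∀ i, τ i = i + 1) ∨ (∀ i, τ i = i + 2) := by
  decide

variable {A B : Fin 3 → Fin 3 → Prop}

/-- Two distinct `i` sharing `f i` would put a diagonal cell into `A ∘ B`. -/
lemma injective_of_comp_irrefl (hAB : ∀ i k, A i k → ¬ B k i) {a b : Fin 3} (hab : a ≠ b)
    {f : Fin 3 → Fin 3} (hf : ∀ i, A (i + a) (f i) ∧ B (f i) (i + b)) : Injective f := by
  intro i i' h
  by_contra hne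
  have shift : ∀ i i' a b : Fin 3, i ≠ i' → a ≠ b →
      i + a = i' + b ∨ i' + a = i + b := by
    decide
  rcases shift i i' a b hne hab with e | e
  · exact hAB _ _ (hf i).1 (e ▸ h ▸ (hf i').2)
  · exact hAB _ _ (hf i').1 (e ▸ h.symm ▸ (hf i).2)

theorem exists_perm_of_comp_eq_ne (h : ∀ i j, (∃ k, A i k ∧ B k j) ↔ i ≠ j) :
    (∃ σ : Perm (Fin 3), ∀ i k, A i k ↔ k = σ i) ∨
      (∃ σ : Perm (Fin 3), ∀ k j, B k j ↔ j = σ k) := by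
  have hAB : ∀ i k, A i k → ¬ B k i := fun i k hA hB => (h i i).1 ⟨k, hA, hB⟩ rfl
  have hne : ∀ i : Fin 3, i ≠ i + 1 := by decide
  -- witnesses for the cells `(i, i + 1)` and `(i + 1, i)`, which no two `i` can share
  choose α hα using fun i => (h i (i + 1)).2 (hne i)
  choose β hβ using fun i => (h (i + 1) i).2 (hne i).symm
  have hαinj : Injective α :=
    injective_of_comp_irrefl hAB (a := 0) (b := 1) (by decide) (by simpa using hα)
  have hβinj : Injective β :=
    injective_of_comp_irrefl hAB (a := 1) (b := 0) (by decide) (by simpa using hβ)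
  set α' := Equiv.ofBijective α hαinj.bijective_of_finite
  set β' := Equiv.ofBijective β hβinj.bijective_of_finite
  -- `β⁻¹ ∘ α` has no fixed point, so it is a rotation
  have hτ : ∀ i, (α'.trans β'.symm) i ≠ i := by
    intro i hi
    have hk : α i = β i := β'.symm_apply_eq.1 hi
    exact hAB _ _ (hβ i).1 (hk ▸ (hα i).2)
  rcases Fin.perm_three_eq_rotation_of_forall_ne _ hτ with hrot | hrot
  · -- column `α i` of `A` contains rows `i` and `i + 2`, so row `α i` of `B` is `{i + 1}`
    right
    refine ⟨α'.symm.trans (Equiv.addRight 1), fun k j => ?_⟩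
    obtain ⟨i, rfl⟩ := α'.surjective k
    have hk : α i = β (i + 1) := β'.symm_apply_eq.1 (hrot i)
    have hA : A (i + 2) (α i) := by simpa [hk, add_assoc] using (hβ (i + 1)).1
    simp only [Equiv.trans_apply, Equiv.symm_apply_apply, Equiv.coe_addRight]
    refine ⟨fun hB => ?_, fun hj => hj ▸ (hα i).2⟩
    by_contra hj
    have other : ∀ i j : Fin 3, j ≠ i + 1 → j = i ∨ j = i + 2 := by decide
    rcases other i j hj with rfl | rfl
    · exact hAB _ _ (hα j).1 hB
    · exact hAB _ _ hA hB
  · -- row `α i` of `B` contains columns `i + 1` and `i + 2`, so column `α i` of `A` is `{i}`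
    left
    refine ⟨α', fun i k => ⟨fun hA => ?_, fun hk => hk ▸ (hα i).1⟩⟩
    obtain ⟨i₀, rfl⟩ := α'.surjective k
    have hk : α i₀ = β (i₀ + 2) := β'.symm_apply_eq.1 (hrot i₀)
    have hB : B (α i₀) (i₀ + 2) := hk ▸ (hβ (i₀ + 2)).2
    refine congrArg α' (by_contra fun hi => ?_)
    have hi' : i ≠ i₀ := Ne.symm hi
    have other : ∀ i j : Fin 3, i ≠ j → i = j + 1 ∨ i = j + 2 := by decide
    rcases other i i₀ hi' with rfl | rfl
    · exact hAB _ _ hA (hα i₀).2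
    · exact hAB _ _ hA hB

end Fin3

theorem isMonomial_or_isMonomial_of_hasPermZeros_mul {X Y : Matrix (Fin 3) (Fin 3) Zmax}
    (h : HasPermZeros (X * Y)) : IsMonomial X ∨ IsMonomial Y := by
  obtain ⟨π, hπ⟩ := h
  have hcomp : ∀ i j, (∃ k, X i k ≠ 0 ∧ Y k (π j) ≠ 0) ↔ i ≠ j := fun i j => by
    rw [← Matrix.mul_apply_ne_zero_iff, ne_eq, hπ, π.injective.eq_iff, eq_comm]
  refine (exists_perm_of_comp_eq_ne hcomp).imp id
    fun ⟨σ, hσ⟩ => ⟨σ.trans π, fun k j => ?_⟩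
  rw [← π.apply_symm_apply j, hσ, Equiv.trans_apply, π.injective.eq_iff, π.symm_apply_eq]

lemma not_hasPermZeros_one : ¬ HasPermZeros (1 : Matrix (Fin 3) (Fin 3) Zmax) := by
  rintro ⟨σ, hσ⟩
  have h₁ := (hσ 0 1).1 (Matrix.one_apply_ne (by decide))
  have h₂ := (hσ 0 2).1 (Matrix.one_apply_ne (by decide))
  exact absurd (h₁.trans h₂.symm) (by decide)

theorem exists_mem_eq_monomial_mul_mul_of_mem_closure {S : Set (Matrix (Fin 3) (Fin 3) Zmax)}
    {A : Matrix (Fin 3) (Fin 3) Zmax} (hA : A ∈ Submonoid.closure S) (hz : HasPermZeros A) :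
    ∃ g ∈ S, ∃ U V, IsMonomial U ∧ IsMonomial V ∧ A = U * g * V := by
  induction hA using Submonoid.closure_induction with
  | mem g hg => exact ⟨g, hg, 1, 1, isMonomial_one, isMonomial_one, by simp⟩
  | one => exact absurd hz not_hasPermZeros_one
  | mul X Y _ _ ihX ihY =>
    rcases isMonomial_or_isMonomial_of_hasPermZeros_mul hz with hX | hY
    · obtain ⟨g, hg, U, V, hU, hV, rfl⟩ := ihY (hz.of_monomial_mul hX)
      exact ⟨g, hg, X * U, V, hX.mul hU, hV, by simp only [mul_assoc]⟩
    · obtain ⟨g, hg, U, V, hU, hV, rfl⟩ := ihX (hz.of_mul_monomial hY)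
      exact ⟨g, hg, U, V * Y, hU, hV.mul hY, by simp only [mul_assoc]⟩

noncomputable def cycleMatrix (t : ℤ) : Matrix (Fin 3) (Fin 3) Zmax :=
  fun i j => if j = i then tz t else if j = i + 1 then 1 else 0

lemma hasPermZeros_cycleMatrix (t : ℤ) : HasPermZeros (cycleMatrix t) := by
  refine ⟨Equiv.addRight 2, fun i j => ?_⟩
  fin_cases i <;> fin_cases j <;> simp [cycleMatrix, tz_ne_zero]

theorem le_two_mul_weight_of_cycleMatrix_eq {t : ℤ} {g U V : Matrix (Fin 3) (Fin 3) Zmax}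
    (hU : IsMonomial U) (hV : IsMonomial V) (h : cycleMatrix t = U * g * V) :
    t ≤ 2 * weight g := by
  obtain ⟨σ, hσ⟩ := hU
  obtain ⟨τ, hτ⟩ := hV
  set u : Fin 3 → ℤ := fun i => val (U i (σ i))
  set v : Fin 3 → ℤ := fun j => val (V (τ.symm j) j)
  have hval : ∀ i j, cycleMatrix t i j ≠ 0 →
      val (cycleMatrix t i j) = u i + val (g (σ i) (τ.symm j)) + v j := by
    intro i j hne
    rw [h, mul_monomial_apply hτ, monomial_mul_apply hσ] at hne ⊢
    obtain ⟨⟨hu, hg⟩, hv⟩ := by simpa only [ne_eq, mul_eq_zero, not_or] using hne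
    rw [val_mul (mul_ne_zero hu hg) hv, val_mul hu hg]
  have hdiag : ∀ i, t = u i + val (g (σ i) (τ.symm i)) + v i := fun i => by
    simpa [cycleMatrix] using hval i i (by simp [cycleMatrix, tz_ne_zero])
  have hsucc : ∀ i, 0 = u i + val (g (σ i) (τ.symm (i + 1))) + v (i + 1) := fun i => by
    have hi : i + 1 ≠ i := by fin_cases i <;> decide
    simpa [cycleMatrix, hi] using hval i (i + 1) (by simp [cycleMatrix, hi])
  have hb := fun i j => abs_le.mp (abs_val_le_weight g i j)
  -- summing over `i`, `u` and `v` cancel: `3 t` is three entries of `g` minus three others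
  have := hdiag 0; have := hdiag 1; have := hdiag 2
  have := hsucc 0; have := hsucc 1; have := hsucc 2
  simp only [Fin.reduceAdd] at *
  linarith [hb (σ 0) (τ.symm 0), hb (σ 1) (τ.symm 1), hb (σ 2) (τ.symm 2),
    hb (σ 0) (τ.symm 1), hb (σ 1) (τ.symm 2), hb (σ 2) (τ.symm 0)]

/-- The monoid `M_3(ℤ_max)` is not finitely generated. -/
theorem stmt17 :
    ¬ ∃ G : Finset (Matrix (Fin 3) (Fin 3) Zmax),
        Submonoid.closure (G : Set (Matrix (Fin 3) (Fin 3) Zmax)) = ⊤ := by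
  rintro ⟨G, hG⟩
  set t := 2 * ∑ g ∈ G, weight g + 1
  obtain ⟨g, hg, U, V, hU, hV, h⟩ := exists_mem_eq_monomial_mul_mul_of_mem_closure
    (hG ▸ Submonoid.mem_top (cycleMatrix t)) (hasPermZeros_cycleMatrix t)
  have hgt := le_two_mul_weight_of_cycleMatrix_eq hU hV h
  have hgG : weight g ≤ ∑ g ∈ G, weight g :=
    Finset.single_le_sum (fun g _ => weight_nonneg g) hg
  omega
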